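/- Let A ∈ ℂ^{m×N} have unit-norm columns and mutual coherence μ(A) < 1/(2s−1) for some s ≥ 1. Then A is injective on s-sparse vectors: if c, c' ∈ ℂ^N each have at most s nonzero entries and Ac = Ac', then c = c'. -/

import Mathlib

/-!
The difference `d = c - c'` is supported on a set `T` of at most `2s` columns and lies in the
kernel of `A`. The Gram matrix of those columns has unit diagonal, and each off-diagonal row sum
has at most `2s - 1` terms, each below `1 / (2s - 1)`; so it is strictly diagonally dominant,
hence nonsingular by Gershgorin, and `d` vanishes.
-/

open Finset Matrix

theorem Finset.sum_lt_one_of_lt_one_div_of_card_le {ι : Type*} (S : Finset ι) (f : ι → ℝ)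
    (t : ℝ) (hf : ∀ k ∈ S, f k < 1 / t) (hcard : (#S : ℝ) ≤ t) : ∑ k ∈ S, f k < 1 := by
  rcases S.eq_empty_or_nonempty with rfl | hS
  · simp
  have ht : 0 < t := (Nat.cast_pos.mpr hS.card_pos).trans_le hcard
  calc ∑ k ∈ S, f k < ∑ _k ∈ S, 1 / t := sum_lt_sum_of_nonempty hS hf
    _ = #S / t := by rw [sum_const, nsmul_eq_mul, mul_one_div]
    _ ≤ 1 := (div_le_one ht).mpr hcard

namespace Matrix

variable {m n K : Type*}

theorem det_ne_zero_of_norm_offDiag_lt [Fintype n] [DecidableEq n] [NormedField K]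
    (M : Matrix n n K) (t : ℝ)
    (hdiag : ∀ k, ‖M k k‖ = 1) (hoff : ∀ k j, k ≠ j → ‖M k j‖ < 1 / t)
    (hcard : (Fintype.card n : ℝ) - 1 ≤ t) : M.det ≠ 0 := by
  refine det_ne_zero_of_sum_row_lt_diag fun k => ?_
  rw [hdiag]
  refine sum_lt_one_of_lt_one_div_of_card_le _ _ t
    (fun j hj => hoff k j (ne_of_mem_erase hj).symm) ?_
  rwa [card_erase_of_mem (mem_univ k), card_univ, Nat.cast_pred (Fintype.card_pos_iff.mpr ⟨k⟩)]

theorem mulVec_eq_submatrix_mulVec_of_support_subset [Fintype n] {R : Type*}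
    [NonUnitalNonAssocSemiring R]
    (M : Matrix m n R) (T : Finset n) {v : n → R} (hv : ∀ j ∉ T, v j = 0) :
    M *ᵥ v = M.submatrix id ((↑) : T → n) *ᵥ fun j => v j := by
  ext i
  simp only [mulVec, dotProduct, submatrix_apply, id]
  rw [← sum_subset (subset_univ T) fun j _ hj => by rw [hv j hj, mul_zero], ← sum_coe_sort]

theorem conjTranspose_mul_self_apply_self [Fintype m] {𝕜 : Type*} [RCLike 𝕜] (A : Matrix m n 𝕜)
    (j : n) : (Aᴴ * A) j j = ((∑ i, ‖A i j‖ ^ 2 : ℝ) : 𝕜) := by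
  push_cast
  exact sum_congr rfl fun i _ => RCLike.conj_mul _

theorem eq_zero_of_mulVec_eq_zero_of_det_gram_ne_zero [Fintype m] [Fintype n] [DecidableEq n]
    [Field K] [StarRing K]
    (A : Matrix m n K) (T : Finset n)
    (hG : ((A.submatrix id ((↑) : T → n))ᴴ * A.submatrix id ((↑) : T → n)).det ≠ 0)
    {v : n → K} (hvT : ∀ j ∉ T, v j = 0) (hAv : A *ᵥ v = 0) : v = 0 := by
  have hw : (fun j : T => v j) = 0 := by
    refine eq_zero_of_mulVec_eq_zero hG ?_
    rw [← mulVec_mulVec, ← mulVec_eq_submatrix_mulVec_of_support_subset A T hvT, hAv, mulVec_zero]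
  funext j
  by_cases hj : j ∈ T
  · exact congrFun hw ⟨j, hj⟩
  · exact hvT j hj

end Matrix

theorem coherence_implies_sparse_injective_general (m N s : ℕ)
    (A : Matrix (Fin m) (Fin N) ℂ)
    (hnorm : ∀ j, ∑ i, ‖A i j‖ ^ 2 = 1)
    (hμ : ∀ k j : Fin N, k ≠ j →
      ‖∑ i, star (A i k) * A i j‖ < 1 / (2 * (s : ℝ) - 1)) :
    ∀ c c' : Fin N → ℂ,
      ({j | c j ≠ 0} : Set (Fin N)).toFinset.card ≤ s →
      ({j | c' j ≠ 0} : Set (Fin N)).toFinset.card ≤ s →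
      A.mulVec c = A.mulVec c' → c = c' := by
  intro c c' hc hc' hA
  set T := ({j | c j ≠ 0} : Set (Fin N)).toFinset ∪ ({j | c' j ≠ 0} : Set (Fin N)).toFinset
  have hT : (#T : ℝ) ≤ 2 * s := by
    exact_mod_cast (card_union_le _ _).trans (by omega)
  set B := A.submatrix id ((↑) : T → Fin N)
  have hG : (Bᴴ * B).det ≠ 0 := by
    refine det_ne_zero_of_norm_offDiag_lt _ (2 * s - 1) (fun k => ?_) (fun k j hkj => ?_) ?_
    · rw [conjTranspose_mul_self_apply_self]
      simp [B, hnorm]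
    · simpa [B, mul_apply] using hμ k j (Subtype.coe_injective.ne hkj)
    · rw [Fintype.card_coe]; linarith
  refine sub_eq_zero.mp
    (eq_zero_of_mulVec_eq_zero_of_det_gram_ne_zero A T hG (fun j hj => ?_) ?_)
  · simp_all [T]
  · rw [mulVec_sub, hA, sub_self]

theorem coherence_implies_sparse_injective (m N s : ℕ) (hs : 1 ≤ s)
    (A : Matrix (Fin m) (Fin N) ℂ)
    (hnorm : ∀ j, ∑ i, ‖A i j‖ ^ 2 = 1)
    (hμ : ∀ k j : Fin N, k ≠ j →
      ‖∑ i, star (A i k) * A i j‖ < 1 / (2 * (s : ℝ) - 1)) :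
    ∀ c c' : Fin N → ℂ,
      ({j | c j ≠ 0} : Set (Fin N)).toFinset.card ≤ s →
      ({j | c' j ≠ 0} : Set (Fin N)).toFinset.card ≤ s →
      A.mulVec c = A.mulVec c' → c = c' :=
  coherence_implies_sparse_injective_general m N s A hnorm hμ
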